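/- arXiv:1309.3679 — 2 statements merged into one kernel-verified Lean document; each statement's English description precedes it below -/
import Mathlib

section
/- Let a > 0, σ > 0, L_B > 0, z ∈ ℝ with z ≠ 0, satisfying L_B z² < (6 + 4√2) σ. Then for every Γ > 0, the quantity 2/Γ − a·(L_B z² − 2σ(1 + aΓσ))/(1 + aΓσ)² is strictly positive. -/
-- `6 + 4√2` is the value of `c` at which the discriminant vanishes, with double root `x = √2 / 2`.
lemma quadratic_pos_of_lt {c x : ℝ} (hc : c < 6 + 4 * Real.sqrt 2) (hx : 0 < x) :
    0 < 4 * x ^ 2 + (6 - c) * x + 2 := by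
  have hsq : Real.sqrt 2 ^ 2 = 2 := Real.sq_sqrt zero_le_two
  have hsplit : 4 * x ^ 2 + (6 - c) * x + 2
      = (2 * x - Real.sqrt 2) ^ 2 + (6 + 4 * Real.sqrt 2 - c) * x := by
    linear_combination -hsq
  rw [hsplit]
  exact add_pos_of_nonneg_of_pos (sq_nonneg _) (mul_pos (sub_pos.mpr hc) hx)

lemma two_div_sub_eq_quadratic_div {a σ L Γ : ℝ} (hσ : σ ≠ 0) (hΓ : Γ ≠ 0)
    (hx : 1 + a * Γ * σ ≠ 0) :
    2 / Γ - a * (L - 2 * σ * (1 + a * Γ * σ)) / (1 + a * Γ * σ) ^ 2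
      = (4 * (a * Γ * σ) ^ 2 + (6 - L / σ) * (a * Γ * σ) + 2) / (Γ * (1 + a * Γ * σ) ^ 2) := by
  have hx2 : (1 + a * Γ * σ) ^ 2 ≠ 0 := pow_ne_zero 2 hx
  rw [div_sub_div _ _ hΓ hx2, div_eq_div_iff (mul_ne_zero hΓ hx2) (mul_ne_zero hΓ hx2)]
  field_simp
  ring

theorem stmt_6_general (a σ LB z : ℝ) (ha : 0 < a) (hσ : 0 < σ)
    (hbound : LB * z ^ 2 < (6 + 4 * Real.sqrt 2) * σ) :
    ∀ Γ : ℝ, 0 < Γ →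
      0 < 2 / Γ - a * (LB * z ^ 2 - 2 * σ * (1 + a * Γ * σ)) / (1 + a * Γ * σ) ^ 2 := by
  intro Γ hΓ
  have hx : 0 < a * Γ * σ := by positivity
  have hc : LB * z ^ 2 / σ < 6 + 4 * Real.sqrt 2 := (div_lt_iff₀ hσ).mpr hbound
  rw [two_div_sub_eq_quadratic_div hσ.ne' hΓ.ne' (by positivity)]
  exact div_pos (quadratic_pos_of_lt hc hx) (by positivity)

theorem stmt_6 (a σ LB z : ℝ) (ha : 0 < a) (hσ : 0 < σ) (hLB : 0 < LB) (hz : z ≠ 0)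
    (hbound : LB * z ^ 2 < (6 + 4 * Real.sqrt 2) * σ) :
    ∀ Γ : ℝ, 0 < Γ →
      0 < 2 / Γ - a * (LB * z ^ 2 - 2 * σ * (1 + a * Γ * σ)) / (1 + a * Γ * σ) ^ 2 :=
  stmt_6_general a σ LB z ha hσ hbound
end

section
/- Let N ≥ 1, n_j > 0, z_j ∈ ℝ, σ_j > 0, Γ_c > 0 for j = 1,…,N, with at least one z_j ≠ 0. Then the equation Γ² = Σ_{j=1}^N n_j z_j² / (1 + Γ_c Γ σ_j)² has a unique positive solution Γ > 0. -/
/-!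
The right-hand side `S Γ` is continuous and nonincreasing on `[0, ∞)` with `S 0 > 0`, so
`Γ ^ 2 - S Γ` is strictly increasing there, negative at `0` and nonnegative at `√(S 0)`.
The intermediate value theorem gives a root, and strict monotonicity makes it unique.
-/

open Set

theorem existsUnique_pos_sq_eq_of_antitoneOn {f : ℝ → ℝ} (hcont : ContinuousOn f (Ici 0))
    (hanti : AntitoneOn f (Ici 0)) (hf0 : 0 < f 0) :
    ∃! x : ℝ, 0 < x ∧ x ^ 2 = f x := by
  set g : ℝ → ℝ := fun x => x ^ 2 - f x
  have hg_mono : StrictMonoOn g (Ici 0) := fun x hx y hy hxy => by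
    have hsq : x ^ 2 < y ^ 2 := pow_lt_pow_left₀ hxy hx two_ne_zero
    linarith [hanti hx hy hxy.le]
  have hg_zero : ∀ x, g x = 0 ↔ x ^ 2 = f x := fun x => sub_eq_zero
  set M := √(f 0)
  have hM : 0 < M := Real.sqrt_pos.mpr hf0
  have hgM : 0 ≤ g M := by
    have : f M ≤ f 0 := hanti self_mem_Ici hM.le hM.le
    simp only [g, M, Real.sq_sqrt hf0.le]
    linarith
  obtain ⟨x, hx, hgx⟩ := intermediate_value_Icc hM.le
    ((continuousOn_pow 2).sub hcont |>.mono Icc_subset_Ici_self) ⟨by simpa [g] using hf0.le, hgM⟩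
  have hx_pos : 0 < x := hx.1.lt_of_ne <| by
    rintro rfl
    have := (hg_zero 0).1 hgx
    norm_num at this
    linarith
  refine ⟨x, ⟨hx_pos, (hg_zero x).1 hgx⟩, fun y ⟨hy, hyx⟩ => ?_⟩
  exact hg_mono.injOn hy.le hx.1 (((hg_zero y).2 hyx).trans hgx.symm)

theorem antitoneOn_div_one_add_mul_sq {a b : ℝ} (ha : 0 ≤ a) (hb : 0 ≤ b) :
    AntitoneOn (fun x => a / (1 + b * x) ^ 2) (Ici 0) := fun x hx y _ hxy => by
  have hx : 0 ≤ x := hx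
  dsimp only
  gcongr

theorem continuousOn_div_one_add_mul_sq (a : ℝ) {b : ℝ} (hb : 0 ≤ b) :
    ContinuousOn (fun x => a / (1 + b * x) ^ 2) (Ici 0) :=
  continuousOn_const.div (by fun_prop) fun x (hx : 0 ≤ x) => by positivity

theorem stmt_8_general {N : ℕ} (n z σ : Fin N → ℝ)
    (hn : ∀ j, 0 < n j) (hσ : ∀ j, 0 < σ j)
    (Γc : ℝ) (hΓc : 0 < Γc) (hz : ∃ j, z j ≠ 0) :
    ∃! Γ : ℝ, 0 < Γ ∧ Γ ^ 2 = ∑ j, n j * (z j) ^ 2 / (1 + Γc * Γ * σ j) ^ 2 := by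
  have hb : ∀ j, 0 ≤ Γc * σ j := fun j => (mul_pos hΓc (hσ j)).le
  have ha : ∀ j, 0 ≤ n j * z j ^ 2 := fun j => by have := hn j; positivity
  simp_rw [mul_right_comm Γc _ (σ _)]
  apply existsUnique_pos_sq_eq_of_antitoneOn
  · exact continuousOn_finsetSum _ fun j _ => continuousOn_div_one_add_mul_sq _ (hb j)
  · exact fun x hx y hy hxy => Finset.sum_le_sum fun j _ =>
      antitoneOn_div_one_add_mul_sq (ha j) (hb j) hx hy hxy
  · obtain ⟨j, hj⟩ := hz
    simp only [mul_zero, add_zero, one_pow, div_one]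
    exact Finset.sum_pos' (fun i _ => ha i) ⟨j, Finset.mem_univ _, by have := hn j; positivity⟩

theorem stmt_8 {N : ℕ} (hN : 1 ≤ N) (n z σ : Fin N → ℝ)
    (hn : ∀ j, 0 < n j) (hσ : ∀ j, 0 < σ j)
    (Γc : ℝ) (hΓc : 0 < Γc) (hz : ∃ j, z j ≠ 0) :
    ∃! Γ : ℝ, 0 < Γ ∧ Γ ^ 2 = ∑ j, n j * (z j) ^ 2 / (1 + Γc * Γ * σ j) ^ 2 :=
  stmt_8_general n z σ hn hσ Γc hΓc hz
end
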